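/- For positive integers m ≤ n, ∑_{k=1}^{m} (n−k)!/((m−k)! k) = (n!/m!)·(ψ₀(n+1) − ψ₀(n−m+1)), where ψ₀ is the digamma function. -/

import Mathlib

/-!
Write `n = m + d` and reflect the summation index, `j = m - k`. With `r j = (d + j)! / j!` the sum
becomes `F m = ∑_{j<m} r j / (m - j)`, and since `(j + 1) r (j + 1) = (d + j + 1) r j` a partial
fraction split gives `(m + 1) F (m + 1) = (d + m + 1) F m + r m`. The same recurrence is satisfied
by `r m * ∑_{i<m} 1 / (d + i + 1)`, which by `ψ₀(x + 1) = ψ₀(x) + 1/x` equals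
`(n! / m!) (ψ₀(n + 1) - ψ₀(d + 1))`.
-/

open Finset

/-- The `m`-th polygamma function: the `(m+1)`-th derivative of `log ∘ Γ`. -/
noncomputable def psi (m : ℕ) (x : ℝ) : ℝ :=
  iteratedDeriv (m + 1) (fun y => Real.log (Real.Gamma y)) x

open scoped Nat

lemma differentiableAt_log_Gamma {x : ℝ} (hx : 0 < x) :
    DifferentiableAt ℝ (fun y => Real.log (Real.Gamma y)) x :=
  (Real.differentiableAt_Gamma fun m => by linarith [(m.cast_nonneg : (0 : ℝ) ≤ m)]).log
    (Real.Gamma_pos_of_pos hx).ne'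

lemma psi_zero_add_one {x : ℝ} (hx : 0 < x) : psi 0 (x + 1) = psi 0 x + 1 / x := by
  have hlog : (fun y => Real.log (Real.Gamma (y + 1)))
      =ᶠ[nhds x] fun y => Real.log y + Real.log (Real.Gamma y) := by
    filter_upwards [Ioi_mem_nhds hx] with y hy
    rw [Real.Gamma_add_one hy.ne', Real.log_mul hy.ne' (Real.Gamma_pos_of_pos hy).ne']
  simp only [psi, zero_add, iteratedDeriv_one]
  rw [← deriv_comp_add_const, hlog.deriv_eq,
    deriv_fun_add (Real.differentiableAt_log hx.ne') (differentiableAt_log_Gamma hx),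
    Real.deriv_log, add_comm, one_div]

lemma psi_zero_add_nat_sub {x : ℝ} (hx : 0 < x) (k : ℕ) :
    psi 0 (x + k) - psi 0 x = ∑ i ∈ range k, 1 / (x + i) := by
  induction k with
  | zero => simp
  | succ k ih =>
    rw [sum_range_succ, ← ih, Nat.cast_succ, ← add_assoc, psi_zero_add_one (by positivity)]
    ring

section RisingRatio

variable {x : ℝ} {r : ℕ → ℝ} (hr : ∀ i : ℕ, (i + 1) * r (i + 1) = (x + i + 1) * r i)
include hr

lemma succ_mul_sum_div_sub_succ (m : ℕ) :
    (m + 1) * ∑ j ∈ range (m + 1), r j / (m + 1 - j) =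
      (x + m + 1) * ∑ j ∈ range m, r j / (m - j) + r m := by
  have hterm : ∀ i ∈ range m, (m + 1) * (r (i + 1) / (m + 1 - (i + 1 : ℕ))) =
      (r (i + 1) - r i) + (x + m + 1) * (r i / (m - i)) := by
    intro i hi
    -- `(m + 1) / (m - i) = 1 + (i + 1) / (m - i)`, then `(i + 1) r (i + 1) = (x + i + 1) r i`
    have hmi : (m : ℝ) - i ≠ 0 := sub_ne_zero.2 (by exact_mod_cast (mem_range.1 hi).ne')
    push_cast
    rw [show (m : ℝ) + 1 - (i + 1) = m - i by ring]
    field_simp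
    linear_combination hr i
  rw [sum_range_succ', mul_add, mul_sum, sum_congr rfl hterm, sum_add_distrib, sum_range_sub,
    ← mul_sum]
  have : (m : ℝ) + 1 ≠ 0 := by positivity
  field_simp
  ring

lemma sum_div_sub_eq_mul_sum_inv (hx : -1 < x) (m : ℕ) :
    ∑ j ∈ range m, r j / (m - j) = r m * ∑ i ∈ range m, 1 / (x + i + 1) := by
  induction m with
  | zero => simp
  | succ m ih =>
    have hm : (m : ℝ) + 1 ≠ 0 := by positivity
    have hxm : x + m + 1 ≠ 0 := by have := m.cast_nonneg (α := ℝ); linarith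
    apply mul_left_cancel₀ hm
    push_cast
    rw [succ_mul_sum_div_sub_succ hr, ih, sum_range_succ]
    linear_combination (norm := skip) -(∑ i ∈ range m, 1 / (x + i + 1) + 1 / (x + m + 1)) * hr m
    field_simp
    ring

end RisingRatio

lemma sum_Icc_one_eq_sum_range_sub {M : Type*} [AddCommMonoid M] (f : ℕ → M) (m : ℕ) :
    ∑ k ∈ Icc 1 m, f k = ∑ j ∈ range m, f (m - j) :=
  sum_nbij' (m - ·) (m - ·) (by intro k; simp; omega) (by intro j; simp; omega)
    (by intro k; simp; omega) (by intro j; simp; omega)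
    (by intro k hk; simp at hk; exact congrArg f (by omega))

lemma succ_mul_factorial_add_succ_div (d i : ℕ) :
    ((i : ℝ) + 1) * ((d + (i + 1))! / (i + 1)! : ℝ) = (d + i + 1) * ((d + i)! / i ! : ℝ) := by
  rw [← add_assoc, Nat.factorial_succ, Nat.factorial_succ]
  push_cast
  field_simp

theorem stmt_15_general (m n : ℕ) (hmn : m ≤ n) :
    ∑ k ∈ Icc 1 m, ((Nat.factorial (n - k) : ℝ) / (Nat.factorial (m - k) : ℝ)) / (k : ℝ) =
      ((Nat.factorial n : ℝ) / (Nat.factorial m : ℝ)) * (psi 0 ((n : ℝ) + 1) - psi 0 ((n : ℝ) - m + 1)) := by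
  obtain ⟨d, rfl⟩ := Nat.exists_eq_add_of_le hmn
  have hreflect : ∀ j ∈ range m, ((m + d - (m - j))! / (m - (m - j))! : ℝ) / ((m - j : ℕ) : ℝ)
      = ((d + j)! / j ! : ℝ) / (m - j) := by
    intro j hj
    have hjm := (mem_range.1 hj).le
    rw [show m + d - (m - j) = d + j by omega, Nat.sub_sub_self hjm, Nat.cast_sub hjm]
  have hpsi : psi 0 (((m + d : ℕ) : ℝ) + 1) - psi 0 (((m + d : ℕ) : ℝ) - m + 1)
      = ∑ i ∈ range m, 1 / ((d : ℝ) + i + 1) := by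
    push_cast
    rw [show (m : ℝ) + d + 1 = d + 1 + m by ring, show (m : ℝ) + d - m + 1 = d + 1 by ring,
      psi_zero_add_nat_sub (by positivity)]
    simp only [add_right_comm]
  have hd : (-1 : ℝ) < d := by linarith [d.cast_nonneg (α := ℝ)]
  rw [sum_Icc_one_eq_sum_range_sub, sum_congr rfl hreflect, hpsi, add_comm m d,
    sum_div_sub_eq_mul_sum_inv (succ_mul_factorial_add_succ_div d) hd]

theorem stmt_15 (m n : ℕ) (hm : 0 < m) (hmn : m ≤ n) :
    ∑ k ∈ Icc 1 m, ((Nat.factorial (n - k) : ℝ) / (Nat.factorial (m - k) : ℝ)) / (k : ℝ) =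
      ((Nat.factorial n : ℝ) / (Nat.factorial m : ℝ)) * (psi 0 ((n : ℝ) + 1) - psi 0 ((n : ℝ) - m + 1)) :=
  stmt_15_general m n hmn
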